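/- arXiv:1607.05096 — 3 statements merged into one kernel-verified Lean document; each statement's English description precedes it below -/
import Mathlib

section
/- Let f : ℝ² → ℍ with ∫_{ℝ²} |f(s,t)| ds dt < ∞, let α > 0, and let w(x,y) = (1/(4π²)) e^{−α(x²+y²)}. Then ∫_{ℝ²} 𝓕_T(x,y) w(x,y) dx dy = ∫_{ℝ²} f(s,t) W(s,t) ds dt, where 𝓕_T(x,y) = ∫_{ℝ²} e^{−i x s} f(s,t) e^{−j y t} ds dt is the two-sided quaternion Fourier transform of f and W(s,t) = (1/(4πα)) e^{−(s²+t²)/(4α)} is the Gauss–Weierstrass kernel (which is the two-sided quaternion Fourier transform of w). -/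
/-!
Both sides are the integral of `w(x,y) e^{-ixs} f(s,t) e^{-jyt}` over `(x,y,s,t)`, taken in the
two possible orders; Fubini applies because the integrand is dominated by `w(x,y) |f(s,t)|`.
Since `w` is a product of one-dimensional Gaussians, the inner integral over `(x,y)` factors as
`(∫ g(x) e^{-ixs} dx) f(s,t) (∫ g(y) e^{-jyt} dy)`. Both factors are real: `e^{μθ}` is the image
of the complex `e^{iθ}` under the real-linear map `1 ↦ 1, i ↦ μ`, which carries the classical
Fourier transform of a Gaussian, a real Gaussian, to the quaternion one. Real factors commute with
`f(s,t)`, and their product is `W(s,t)`.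
-/

open MeasureTheory Filter Real Set
open scoped Quaternion Topology

noncomputable section

def qi : ℍ[ℝ] := ⟨0,1,0,0⟩
def qj : ℍ[ℝ] := ⟨0,0,1,0⟩

/-- `e^{μθ} = cos θ + μ sin θ` for a (pure unit) quaternion `μ`. -/
def qexp (μ : ℍ[ℝ]) (θ : ℝ) : ℍ[ℝ] := (Real.cos θ : ℍ[ℝ]) + Real.sin θ • μ

/-- Two-sided quaternion Fourier transform. -/
def QFT_T (f : ℝ × ℝ → ℍ[ℝ]) (u v : ℝ) : ℍ[ℝ] :=
  ∫ p : ℝ × ℝ, qexp qi (-(u * p.1)) * f p * qexp qj (-(v * p.2))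

lemma norm_qexp_le (μ : ℍ[ℝ]) (θ : ℝ) : ‖qexp μ θ‖ ≤ 1 + ‖μ‖ := by
  refine (norm_add_le _ _).trans (add_le_add ?_ ?_)
  · simpa only [Quaternion.norm_coe, Real.norm_eq_abs] using abs_cos_le_one θ
  · simpa only [norm_smul, Real.norm_eq_abs] using
      mul_le_of_le_one_left (norm_nonneg μ) (abs_sin_le_one θ)

lemma continuous_qexp (μ : ℍ[ℝ]) : Continuous (qexp μ) :=
  (Quaternion.continuous_coe.comp continuous_cos).add (continuous_sin.smul continuous_const)

lemma norm_qexp_mul_mul_qexp_le (μ ν a : ℍ[ℝ]) (θ φ : ℝ) :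
    ‖qexp μ θ * a * qexp ν φ‖ ≤ (1 + ‖μ‖) * (1 + ‖ν‖) * ‖a‖ :=
  calc ‖qexp μ θ * a * qexp ν φ‖ ≤ ‖qexp μ θ‖ * ‖a‖ * ‖qexp ν φ‖ := norm_mul₃_le
    _ ≤ (1 + ‖μ‖) * ‖a‖ * (1 + ‖ν‖) := by gcongr <;> exact norm_qexp_le _ _
    _ = (1 + ‖μ‖) * (1 + ‖ν‖) * ‖a‖ := by ring

def complexToQuaternion (μ : ℍ[ℝ]) : ℂ →L[ℝ] ℍ[ℝ] :=
  Complex.reCLM.smulRight 1 + Complex.imCLM.smulRight μ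

lemma complexToQuaternion_ofReal (μ : ℍ[ℝ]) (r : ℝ) : complexToQuaternion μ r = r := by
  simp [complexToQuaternion, ← Quaternion.coe_one, Quaternion.smul_coe]

lemma complexToQuaternion_real_mul_exp (μ : ℍ[ℝ]) (r θ : ℝ) :
    complexToQuaternion μ (r * Complex.exp (θ * Complex.I)) = r • qexp μ θ := by
  rw [Complex.exp_mul_I]
  simp [complexToQuaternion, qexp, ← Quaternion.coe_one, Quaternion.smul_coe, smul_add, smul_smul,
    Complex.cos_ofReal_re, Complex.sin_ofReal_re]

lemma integral_exp_neg_mul_sq_smul_qexp {α : ℝ} (hα : 0 < α) (μ : ℍ[ℝ]) (s : ℝ) :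
    ∫ x : ℝ, exp (-α * x ^ 2) • qexp μ (-(x * s)) =
      ((√(π / α) * exp (-s ^ 2 / (4 * α)) : ℝ) : ℍ[ℝ]) := by
  have hα' : 0 < (α : ℂ).re := by simpa using hα
  set F : ℝ → ℂ := fun x => Complex.exp (Complex.I * ↑(-s) * x) * Complex.exp (-α * x ^ 2)
  have hF_int : Integrable F := by
    refine (integrable_cexp_quadratic hα' (Complex.I * ↑(-s)) 0).congr (.of_forall fun x => ?_)
    simp only [F, ← Complex.exp_add]
    ring_nf
  have hF_integral : ∫ x, F x = ↑(√(π / α) * exp (-s ^ 2 / (4 * α))) := by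
    rw [fourierIntegral_gaussian hα', Complex.ofReal_mul, Complex.ofReal_exp, sqrt_eq_rpow,
      Complex.ofReal_cpow (by positivity)]
    push_cast
    ring_nf
  have h_integrand (x : ℝ) :
      exp (-α * x ^ 2) • qexp μ (-(x * s)) = complexToQuaternion μ (F x) := by
    rw [← complexToQuaternion_real_mul_exp]
    simp only [F, Complex.ofReal_exp]
    push_cast
    ring_nf
  simp only [h_integrand]
  rw [(complexToQuaternion μ).integral_comp_comm hF_int, hF_integral, complexToQuaternion_ofReal]

lemma MeasureTheory.Integrable.smul_qexp {g : ℝ → ℝ} (hg : Integrable g) (μ : ℍ[ℝ]) (s : ℝ) :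
    Integrable fun x => g x • qexp μ (-(x * s)) :=
  hg.smul_bdd (1 + ‖μ‖) ((continuous_qexp μ).comp (by fun_prop)).aestronglyMeasurable
    (.of_forall fun _ => norm_qexp_le μ _)

lemma integral_prod_mul_mul {X Y A : Type*} [MeasurableSpace X] [MeasurableSpace Y]
    [NormedRing A] [NormedAlgebra ℝ A] [CompleteSpace A] {μ : Measure X} {ν : Measure Y}
    [SFinite μ] [SigmaFinite ν] {G : X → A} {H : Y → A} (hG : Integrable G μ)
    (hH : Integrable H ν) (a : A) :
    ∫ p, G p.1 * a * H p.2 ∂μ.prod ν = (∫ x, G x ∂μ) * a * ∫ y, H y ∂ν := by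
  rw [integral_prod _ ((hG.mul_const a).mul_prod hH)]
  simp only [integral_const_mul_of_integrable hH]
  rw [integral_mul_const_of_integrable (hG.mul_const a), integral_mul_const_of_integrable hG]

theorem integral_QFT_T_mul_coe {f : ℝ × ℝ → ℍ[ℝ]} (hf : Integrable f) {w : ℝ × ℝ → ℝ}
    (hw : Integrable w) :
    ∫ p : ℝ × ℝ, QFT_T f p.1 p.2 * (w p : ℍ[ℝ]) =
      ∫ q : ℝ × ℝ, ∫ p : ℝ × ℝ, w p • (qexp qi (-(p.1 * q.1)) * f q * qexp qj (-(p.2 * q.2))) := by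
  have h_meas : AEStronglyMeasurable (fun z : (ℝ × ℝ) × (ℝ × ℝ) =>
      w z.1 • (qexp qi (-(z.1.1 * z.2.1)) * f z.2 * qexp qj (-(z.1.2 * z.2.2))))
      (volume.prod volume) :=
    hw.1.comp_fst.smul ((((continuous_qexp qi).comp (by fun_prop)).aestronglyMeasurable.mul
      hf.1.comp_snd).mul ((continuous_qexp qj).comp (by fun_prop)).aestronglyMeasurable)
  have h_int : Integrable (fun z : (ℝ × ℝ) × (ℝ × ℝ) =>
      w z.1 • (qexp qi (-(z.1.1 * z.2.1)) * f z.2 * qexp qj (-(z.1.2 * z.2.2))))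
      (volume.prod volume) := by
    refine (hw.norm.mul_prod (hf.norm.const_mul ((1 + ‖qi‖) * (1 + ‖qj‖)))).mono' h_meas
      (.of_forall fun z => ?_)
    rw [norm_smul]
    exact mul_le_mul_of_nonneg_left (norm_qexp_mul_mul_qexp_le _ _ _ _ _) (norm_nonneg _)
  calc ∫ p : ℝ × ℝ, QFT_T f p.1 p.2 * (w p : ℍ[ℝ])
      = ∫ p : ℝ × ℝ, ∫ q : ℝ × ℝ,
          w p • (qexp qi (-(p.1 * q.1)) * f q * qexp qj (-(p.2 * q.2))) := by
        simp only [QFT_T, Quaternion.mul_coe_eq_smul, integral_smul]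
    _ = _ := integral_integral_swap h_int

theorem integral_QFT_T_mul_coe_prod {f : ℝ × ℝ → ℍ[ℝ]} (hf : Integrable f) {g h : ℝ → ℝ}
    (hg : Integrable g) (hh : Integrable h) :
    ∫ p : ℝ × ℝ, QFT_T f p.1 p.2 * ((g p.1 * h p.2 : ℝ) : ℍ[ℝ]) =
      ∫ q : ℝ × ℝ, (∫ x, g x • qexp qi (-(x * q.1))) * f q * ∫ y, h y • qexp qj (-(y * q.2)) := by
  rw [integral_QFT_T_mul_coe hf (hg.mul_prod hh)]
  refine integral_congr_ae (.of_forall fun q => ?_)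
  refine Eq.trans ?_ (integral_prod_mul_mul (hg.smul_qexp qi q.1) (hh.smul_qexp qj q.2) (f q))
  refine integral_congr_ae (.of_forall fun p => ?_)
  simp only [smul_mul_assoc, mul_smul_comm, smul_smul, mul_comm (h p.2)]

/-- The integral of the two-sided QFT against a Gaussian equals the integral of `f`
against the Gauss–Weierstrass kernel. -/
theorem qft_gauss_weierstrass_duality
    (f : ℝ × ℝ → ℍ[ℝ]) (hf : Integrable f) (α : ℝ) (hα : 0 < α) :
    (∫ p : ℝ × ℝ, QFT_T f p.1 p.2 *
        ((1 / (4 * π ^ 2) * Real.exp (-α * (p.1 ^ 2 + p.2 ^ 2)) : ℝ) : ℍ[ℝ])) =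
    ∫ p : ℝ × ℝ, f p *
        ((1 / (4 * π * α) * Real.exp (-(p.1 ^ 2 + p.2 ^ 2) / (4 * α)) : ℝ) : ℍ[ℝ]) := by
  set g : ℝ → ℝ := fun x => (2 * π)⁻¹ * exp (-α * x ^ 2)
  have hg : Integrable g := (integrable_exp_neg_mul_sq hα).const_mul _
  have hĝ (μ : ℍ[ℝ]) (s : ℝ) : ∫ x, g x • qexp μ (-(x * s)) =
      (((2 * π)⁻¹ * (√(π / α) * exp (-s ^ 2 / (4 * α))) : ℝ) : ℍ[ℝ]) := by
    simp only [g, mul_smul, integral_smul, integral_exp_neg_mul_sq_smul_qexp hα,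
      Quaternion.smul_coe]
  have h_weight (p : ℝ × ℝ) :
      1 / (4 * π ^ 2) * exp (-α * (p.1 ^ 2 + p.2 ^ 2)) = g p.1 * g p.2 := by
    simp only [g, mul_add, neg_mul, exp_add]
    ring
  have h_kernel (s t : ℝ) :
      (2 * π)⁻¹ * (√(π / α) * exp (-s ^ 2 / (4 * α))) *
        ((2 * π)⁻¹ * (√(π / α) * exp (-t ^ 2 / (4 * α)))) =
      1 / (4 * π * α) * exp (-(s ^ 2 + t ^ 2) / (4 * α)) := by
    rw [neg_add, add_div, exp_add]
    field_simp
    rw [sq_sqrt (by positivity)]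
    field_simp
    ring
  simp only [h_weight, integral_QFT_T_mul_coe_prod hf hg hg, hĝ]
  congr 1
  funext q
  rw [Quaternion.coe_commutes, mul_assoc, ← Quaternion.coe_mul, h_kernel]
end
end

section
/- Let f : ℝ² → ℍ with ∫_{ℝ²} |f(s,t)| ds dt < ∞ and write f = f₀ + i f₁ + j f₂ + k f₃ with real components fₙ. For each n = 0,1,2,3 let Fₙ(u,v) = ∫_{ℝ²} fₙ(s,t) e^{−i u s} e^{−i v t} ds dt be the 2D Fourier transform of fₙ. If ∫_{ℝ²} |Fₙ(u,v)| du dv < ∞ for every n = 0,1,2,3, then f(s,t) = (1/(4π²)) ∫_{ℝ²} e^{i s u} 𝓕_T(u,v) e^{j t v} du dv for almost every (s,t) ∈ ℝ², where 𝓕_T is the two-sided quaternion Fourier transform of f. -/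
/-!
The plane split `q = q₊ + q₋`, `q± = (q ± i q j) / 2`, decomposes `ℍ` into two real planes on
which the two-sided kernel acts by complex multiplication:
`e^{iθ} q₊ e^{jφ} = e^{i(θ-φ)} q₊` and `e^{iθ} q₋ e^{jφ} = e^{i(θ+φ)} q₋`.
In complex coordinates on these planes, the QFT of `f` is the pair of ordinary 2D Fourier
transforms of `f₊` (evaluated at `(u, -v)`) and of `f₋`; both are linear combinations of the
`Fₙ`, hence integrable. The inversion formula thus reduces to a.e. Fourier inversion for an
integrable complex function with integrable transform, which follows by testing against smooth
compactly supported `φ`: writing `φ = 𝓕 (𝓕⁻ φ)`, the multiplication formula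
`∫ 𝓕 φ • g = ∫ φ • 𝓕 g` moves both transforms from `φ` onto `f`.
-/

open MeasureTheory Filter Real Set
open scoped Quaternion Topology

noncomputable section

/-- 2D (complex) Fourier transform of a real-valued function. -/
def FT2D (g : ℝ × ℝ → ℝ) (u v : ℝ) : ℂ :=
  ∫ p : ℝ × ℝ, (g p : ℂ) * Complex.exp (-(Complex.I * u * p.1)) *
    Complex.exp (-(Complex.I * v * p.2))

open scoped FourierTransform RealInnerProductSpace SchwartzMap

section InnerProductSpace

variable {V E : Type*} [NormedAddCommGroup V] [InnerProductSpace ℝ V] [MeasurableSpace V]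
  [BorelSpace V] [FiniteDimensional ℝ V] [NormedAddCommGroup E] [NormedSpace ℂ E]

theorem MeasureTheory.Integrable.fourierInv_fourier_ae_eq [CompleteSpace E] {f : V → E}
    (hf : Integrable f) (hf' : Integrable (𝓕 f)) : 𝓕⁻ (𝓕 f) =ᵐ[volume] f := by
  have hL : Continuous fun p : V × V => (-innerₗ V) p.1 p.2 := by
    simp only [LinearMap.neg_apply, innerₗ_apply_apply]
    fun_prop
  have hcont : Continuous (𝓕⁻ (𝓕 f)) :=
    VectorFourier.fourierIntegral_continuous Real.continuous_fourierChar hL hf'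
  refine ae_eq_of_integral_contDiff_smul_eq hcont.locallyIntegrable hf.locallyIntegrable
    fun g hg hgc => ?_
  let φ : 𝓢(V, ℂ) := (hgc.comp_left Complex.ofReal_zero).toSchwartzMap
    (Complex.ofRealCLM.contDiff.comp hg)
  have hφ (x : V) : φ x = g x := rfl
  have hφ' : Integrable (𝓕⁻ (φ : V → ℂ)) := by
    rw [← SchwartzMap.fourierInv_coe]
    exact (𝓕⁻ φ).integrable
  have hflip : (-innerₗ V).flip = -innerₗ V := by ext; simp [real_inner_comm]
  calc ∫ x, g x • 𝓕⁻ (𝓕 f) x = ∫ x, φ x • 𝓕⁻ (𝓕 f) x := by simp [hφ, Complex.coe_smul]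
    _ = ∫ ξ, 𝓕⁻ (φ : V → ℂ) ξ • 𝓕 f ξ := by
      have := VectorFourier.integral_fourierIntegral_smul_eq_flip (L := -innerₗ V)
        Real.continuous_fourierChar hL (φ.integrable (μ := volume)) hf'
      rw [hflip] at this
      exact this.symm
    _ = ∫ x, 𝓕 (𝓕⁻ (φ : V → ℂ)) x • f x := by
      have := VectorFourier.integral_fourierIntegral_smul_eq_flip (L := innerₗ V)
        Real.continuous_fourierChar continuous_inner hφ' hf
      rw [flip_innerₗ] at this
      exact this.symm
    _ = ∫ x, g x • f x := by
      rw [← SchwartzMap.fourierInv_coe, ← SchwartzMap.fourier_coe,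
        FourierTransform.fourier_fourierInv_eq]
      simp [hφ, Complex.coe_smul]

def angularFourier (f : V → E) (w : V) : E :=
  ∫ v, Complex.exp (((-⟪v, w⟫ : ℝ) : ℂ) * Complex.I) • f v

theorem angularFourier_eq_fourier (f : V → E) (w : V) :
    angularFourier f w = 𝓕 f ((2 * π)⁻¹ • w) := by
  rw [Real.fourier_eq', angularFourier]
  congr 1 with v
  rw [inner_smul_right]
  congr 3
  push_cast
  field_simp

theorem MeasureTheory.Integrable.ae_integral_exp_smul_angularFourier [CompleteSpace E]
    {f : V → E} (hf : Integrable f) (hF : Integrable (angularFourier f)) :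
    ∀ᵐ v, ∫ w, Complex.exp ((⟪v, w⟫ : ℂ) * Complex.I) • angularFourier f w
      = (2 * π) ^ Module.finrank ℝ V • f v := by
  have hF' : Integrable (𝓕 f) := by
    rw [← integrable_comp_smul_iff volume _ (by positivity : (2 * π)⁻¹ ≠ 0)]
    simpa only [← angularFourier_eq_fourier] using hF
  filter_upwards [hf.fourierInv_fourier_ae_eq hF'] with v hv
  rw [← hv, Real.fourierInv_eq',
    ← Measure.integral_comp_inv_smul_of_nonneg volume _ (by positivity)]
  congr 1 with w
  rw [angularFourier_eq_fourier, real_inner_smul_left, real_inner_comm]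
  congr 3
  push_cast
  field_simp

end InnerProductSpace

def angularFourierProd (g : ℝ × ℝ → ℂ) (w : ℝ × ℝ) : ℂ :=
  ∫ p : ℝ × ℝ, Complex.exp (((-(w.1 * p.1 + w.2 * p.2) : ℝ) : ℂ) * Complex.I) * g p

theorem angularFourierProd_measurableEquivRealProd (g : ℝ × ℝ → ℂ) (z : ℂ) :
    angularFourierProd g (Complex.measurableEquivRealProd z)
      = angularFourier (g ∘ Complex.measurableEquivRealProd) z := by
  rw [angularFourierProd, angularFourier, ← Complex.volume_preserving_equiv_real_prod.integral_comp
    Complex.measurableEquivRealProd.measurableEmbedding]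
  congr 1 with x
  simp [Complex.inner, mul_comm]

theorem MeasureTheory.Integrable.ae_integral_exp_mul_angularFourierProd {g : ℝ × ℝ → ℂ}
    (hg : Integrable g) (hG : Integrable (angularFourierProd g)) :
    ∀ᵐ p : ℝ × ℝ, ∫ w, Complex.exp (((p.1 * w.1 + p.2 * w.2 : ℝ) : ℂ) * Complex.I)
        * angularFourierProd g w = ((2 * π) ^ 2 : ℝ) • g p := by
  set e := Complex.measurableEquivRealProd
  have he : MeasurePreserving e := Complex.volume_preserving_equiv_real_prod
  have hGe (z : ℂ) : angularFourierProd g (e z) = angularFourier (g ∘ e) z :=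
    angularFourierProd_measurableEquivRealProd g z
  have hge : Integrable (g ∘ e) := (he.integrable_comp_emb e.measurableEmbedding).mpr hg
  have hGe_int : Integrable (angularFourier (g ∘ e)) :=
    funext hGe ▸ (he.integrable_comp_emb e.measurableEmbedding).mpr hG
  filter_upwards [he.symm.quasiMeasurePreserving.ae
    (hge.ae_integral_exp_smul_angularFourier hGe_int)] with p hp
  rw [← he.integral_comp e.measurableEmbedding]
  simp_rw [← hGe] at hp
  simpa [e, Complex.inner, Complex.finrank_real_complex, mul_comm] using hp

/- Quaternion literals `⟨a, b, c, d⟩` are typed in `QuaternionAlgebra ℝ (-1) 0 (-1)`, on which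
the `ℍ[ℝ]` simp lemmas do not fire; hence the component lemmas below, proved by `rfl`, and the
`show` steps in the definitions of `plusEmb` and `minusEmb`. -/

@[simp] theorem qi_re : qi.re = 0 := rfl
@[simp] theorem qi_imI : qi.imI = 1 := rfl
@[simp] theorem qi_imJ : qi.imJ = 0 := rfl
@[simp] theorem qi_imK : qi.imK = 0 := rfl
@[simp] theorem qj_re : qj.re = 0 := rfl
@[simp] theorem qj_imI : qj.imI = 0 := rfl
@[simp] theorem qj_imJ : qj.imJ = 1 := rfl
@[simp] theorem qj_imK : qj.imK = 0 := rfl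

/- `plusEmb (plusCoord q) = (q + qi * q * qj) / 2` and
`minusEmb (minusCoord q) = (q - qi * q * qj) / 2`; the complex coordinate of each plane is chosen
so that left multiplication by `qi` is multiplication by `Complex.I`. -/

def plusCoord : ℍ[ℝ] →L[ℝ] ℂ := LinearMap.toContinuousLinearMap
  { toFun q := ⟨q.re + q.imK, q.imI - q.imJ⟩
    map_add' _ _ := by apply Complex.ext <;> simp <;> ring
    map_smul' _ _ := by apply Complex.ext <;> simp <;> ring }

def minusCoord : ℍ[ℝ] →L[ℝ] ℂ := LinearMap.toContinuousLinearMap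
  { toFun q := ⟨q.re - q.imK, q.imI + q.imJ⟩
    map_add' _ _ := by apply Complex.ext <;> simp <;> ring
    map_smul' _ _ := by apply Complex.ext <;> simp <;> ring }

def plusEmb : ℂ →L[ℝ] ℍ[ℝ] := LinearMap.toContinuousLinearMap
  { toFun z := ⟨z.re / 2, z.im / 2, -z.im / 2, z.re / 2⟩
    map_add' _ _ := by
      ext <;> simp only [Complex.add_re, Complex.add_im] <;> (show _ = _ + _; ring)
    map_smul' _ _ := by
      ext <;> simp only [Complex.smul_re, Complex.smul_im, RingHom.id_apply] <;>
        (show _ = _ * _; ring) }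

def minusEmb : ℂ →L[ℝ] ℍ[ℝ] := LinearMap.toContinuousLinearMap
  { toFun z := ⟨z.re / 2, z.im / 2, z.im / 2, -z.re / 2⟩
    map_add' _ _ := by
      ext <;> simp only [Complex.add_re, Complex.add_im] <;> (show _ = _ + _; ring)
    map_smul' _ _ := by
      ext <;> simp only [Complex.smul_re, Complex.smul_im, RingHom.id_apply] <;>
        (show _ = _ * _; ring) }

@[simp] theorem plusCoord_re (q : ℍ[ℝ]) : (plusCoord q).re = q.re + q.imK := rfl
@[simp] theorem plusCoord_im (q : ℍ[ℝ]) : (plusCoord q).im = q.imI - q.imJ := rfl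
@[simp] theorem minusCoord_re (q : ℍ[ℝ]) : (minusCoord q).re = q.re - q.imK := rfl
@[simp] theorem minusCoord_im (q : ℍ[ℝ]) : (minusCoord q).im = q.imI + q.imJ := rfl
@[simp] theorem plusEmb_re (z : ℂ) : (plusEmb z).re = z.re / 2 := rfl
@[simp] theorem plusEmb_imI (z : ℂ) : (plusEmb z).imI = z.im / 2 := rfl
@[simp] theorem plusEmb_imJ (z : ℂ) : (plusEmb z).imJ = -z.im / 2 := rfl
@[simp] theorem plusEmb_imK (z : ℂ) : (plusEmb z).imK = z.re / 2 := rfl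
@[simp] theorem minusEmb_re (z : ℂ) : (minusEmb z).re = z.re / 2 := rfl
@[simp] theorem minusEmb_imI (z : ℂ) : (minusEmb z).imI = z.im / 2 := rfl
@[simp] theorem minusEmb_imJ (z : ℂ) : (minusEmb z).imJ = z.im / 2 := rfl
@[simp] theorem minusEmb_imK (z : ℂ) : (minusEmb z).imK = -z.re / 2 := rfl

theorem plusEmb_plusCoord_add_minusEmb_minusCoord (q : ℍ[ℝ]) :
    plusEmb (plusCoord q) + minusEmb (minusCoord q) = q := by
  ext <;> simp <;> ring

theorem qexp_qi_mul_plusEmb_mul_qexp_qj (θ φ : ℝ) (z : ℂ) :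
    qexp qi θ * plusEmb z * qexp qj φ
      = plusEmb (Complex.exp (((θ - φ : ℝ) : ℂ) * Complex.I) * z) := by
  rw [Complex.exp_mul_I, ← Complex.ofReal_cos, ← Complex.ofReal_sin]
  ext <;> simp [qexp, Real.cos_sub, Real.sin_sub, Complex.cos_ofReal_re,
    Complex.sin_ofReal_re] <;> ring

theorem qexp_qi_mul_minusEmb_mul_qexp_qj (θ φ : ℝ) (z : ℂ) :
    qexp qi θ * minusEmb z * qexp qj φ
      = minusEmb (Complex.exp (((θ + φ : ℝ) : ℂ) * Complex.I) * z) := by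
  rw [Complex.exp_mul_I, ← Complex.ofReal_cos, ← Complex.ofReal_sin]
  ext <;> simp [qexp, Real.cos_add, Real.sin_add, Complex.cos_ofReal_re,
    Complex.sin_ofReal_re] <;> ring

section MeasureSpace

variable {α : Type*} [MeasurableSpace α] {μ : Measure α}

theorem MeasureTheory.Integrable.exp_mul_I_mul {A : α → ℂ} (hA : Integrable A μ) {c : α → ℝ}
    (hc : Measurable c) : Integrable (fun p => Complex.exp ((c p : ℂ) * Complex.I) * A p) μ :=
  hA.bdd_mul (by fun_prop) (Eventually.of_forall fun p => (Complex.norm_exp_ofReal_mul_I _).le)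

theorem MeasureTheory.Integrable.quaternion_equivTuple {f : α → ℍ[ℝ]} (hf : Integrable f μ)
    (n : Fin 4) : Integrable (fun p => Quaternion.equivTuple ℝ (f p) n) μ :=
  ((EuclideanSpace.proj n).comp
    Quaternion.linearIsometryEquivTuple.toContinuousLinearEquiv.toContinuousLinearMap
    ).integrable_comp hf

theorem integral_qexp_mul_plusEmb_add_minusEmb_mul_qexp {A B : α → ℂ} (hA : Integrable A μ)
    (hB : Integrable B μ) {a b : α → ℝ} (ha : Measurable a) (hb : Measurable b) :
    ∫ p, qexp qi (a p) * (plusEmb (A p) + minusEmb (B p)) * qexp qj (b p) ∂μ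
      = plusEmb (∫ p, Complex.exp (((a p - b p : ℝ) : ℂ) * Complex.I) * A p ∂μ)
        + minusEmb (∫ p, Complex.exp (((a p + b p : ℝ) : ℂ) * Complex.I) * B p ∂μ) := by
  have hA' : Integrable (fun p => Complex.exp (((a p - b p : ℝ) : ℂ) * Complex.I) * A p) μ :=
    hA.exp_mul_I_mul (ha.sub hb)
  have hB' : Integrable (fun p => Complex.exp (((a p + b p : ℝ) : ℂ) * Complex.I) * B p) μ :=
    hB.exp_mul_I_mul (ha.add hb)
  simp_rw [mul_add, add_mul, qexp_qi_mul_plusEmb_mul_qexp_qj, qexp_qi_mul_minusEmb_mul_qexp_qj]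
  rw [integral_add (plusEmb.integrable_comp hA') (minusEmb.integrable_comp hB'),
    plusEmb.integral_comp_comm hA', minusEmb.integral_comp_comm hB']

end MeasureSpace

theorem FT2D_eq_angularFourierProd (g : ℝ × ℝ → ℝ) (u v : ℝ) :
    FT2D g u v = angularFourierProd (fun p => (g p : ℂ)) (u, v) := by
  rw [FT2D, angularFourierProd]
  congr 1 with p
  rw [mul_assoc, ← Complex.exp_add, mul_comm]
  congr 2
  push_cast
  ring

theorem angularFourierProd_clm_comp (L : ℍ[ℝ] →L[ℝ] ℂ) {f : ℝ × ℝ → ℍ[ℝ]} (hf : Integrable f)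
    (w : ℝ × ℝ) :
    angularFourierProd (fun p => L (f p)) w =
      FT2D (fun q => (f q).re) w.1 w.2 * L 1 + FT2D (fun q => (f q).imI) w.1 w.2 * L qi
        + FT2D (fun q => (f q).imJ) w.1 w.2 * L qj
        + FT2D (fun q => (f q).imK) w.1 w.2 * L (qi * qj) := by
  have hL (q : ℍ[ℝ]) :
      L q = q.re * L 1 + q.imI * L qi + q.imJ * L qj + q.imK * L (qi * qj) := by
    conv_lhs => rw [← show q.re • 1 + q.imI • qi + q.imJ • qj + q.imK • (qi * qj) = q by
      ext <;> simp]
    simp only [map_add, map_smul, Complex.real_smul]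
  have hterm {c : ℍ[ℝ] → ℝ} (hc : Integrable fun p => c (f p)) (z : ℂ) :
      Integrable fun p : ℝ × ℝ =>
        Complex.exp (((-(w.1 * p.1 + w.2 * p.2) : ℝ) : ℂ) * Complex.I) * (c (f p) : ℂ) * z :=
    (hc.ofReal.exp_mul_I_mul (c := fun p => -(w.1 * p.1 + w.2 * p.2)) (by fun_prop)).mul_const z
  have h0 := hterm (c := QuaternionAlgebra.re) (hf.quaternion_equivTuple 0) (L 1)
  have h1 := hterm (c := QuaternionAlgebra.imI) (hf.quaternion_equivTuple 1) (L qi)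
  have h2 := hterm (c := QuaternionAlgebra.imJ) (hf.quaternion_equivTuple 2) (L qj)
  have h3 := hterm (c := QuaternionAlgebra.imK) (hf.quaternion_equivTuple 3) (L (qi * qj))
  simp_rw [FT2D_eq_angularFourierProd, angularFourierProd, fun p => hL (f p), mul_add,
    ← mul_assoc]
  rw [integral_add ((h0.fun_add h1).fun_add h2) h3, integral_add (h0.fun_add h1) h2,
    integral_add h0 h1, integral_mul_const, integral_mul_const, integral_mul_const,
    integral_mul_const]

theorem integrable_angularFourierProd_clm_comp (L : ℍ[ℝ] →L[ℝ] ℂ) {f : ℝ × ℝ → ℍ[ℝ]}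
    (hf : Integrable f)
    (hF0 : Integrable (fun p : ℝ × ℝ => FT2D (fun q => (f q).re) p.1 p.2))
    (hF1 : Integrable (fun p : ℝ × ℝ => FT2D (fun q => (f q).imI) p.1 p.2))
    (hF2 : Integrable (fun p : ℝ × ℝ => FT2D (fun q => (f q).imJ) p.1 p.2))
    (hF3 : Integrable (fun p : ℝ × ℝ => FT2D (fun q => (f q).imK) p.1 p.2)) :
    Integrable (angularFourierProd fun p => L (f p)) := by
  rw [funext (angularFourierProd_clm_comp L hf)]
  exact (((hF0.mul_const _).add (hF1.mul_const _)).add (hF2.mul_const _)).add (hF3.mul_const _)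

theorem measurePreserving_prodMap_id_neg :
    MeasurePreserving (Prod.map id Neg.neg : ℝ × ℝ → ℝ × ℝ) :=
  (MeasurePreserving.id volume).prod (Measure.measurePreserving_neg volume)

theorem QFT_T_eq_plusEmb_add_minusEmb {f : ℝ × ℝ → ℍ[ℝ]} (hf : Integrable f) (u v : ℝ) :
    QFT_T f u v = plusEmb (angularFourierProd (fun p => plusCoord (f p)) (u, -v))
      + minusEmb (angularFourierProd (fun p => minusCoord (f p)) (u, v)) := by
  have h := integral_qexp_mul_plusEmb_add_minusEmb_mul_qexp (plusCoord.integrable_comp hf)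
    (minusCoord.integrable_comp hf) (a := fun p => -(u * p.1)) (b := fun p => -(v * p.2))
    (by fun_prop) (by fun_prop)
  simp only [plusEmb_plusCoord_add_minusEmb_minusCoord] at h
  rw [QFT_T, h, angularFourierProd, angularFourierProd]
  congr 3 <;> ext p <;> congr 3 <;> push_cast <;> ring

theorem integral_qexp_mul_QFT_T_mul_qexp {f : ℝ × ℝ → ℍ[ℝ]} (hf : Integrable f)
    (hGp : Integrable (angularFourierProd fun p => plusCoord (f p)))
    (hGm : Integrable (angularFourierProd fun p => minusCoord (f p))) (p : ℝ × ℝ) :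
    ∫ q : ℝ × ℝ, qexp qi (p.1 * q.1) * QFT_T f q.1 q.2 * qexp qj (p.2 * q.2)
      = plusEmb (∫ w, Complex.exp (((p.1 * w.1 + p.2 * w.2 : ℝ) : ℂ) * Complex.I)
          * angularFourierProd (fun p => plusCoord (f p)) w)
        + minusEmb (∫ w, Complex.exp (((p.1 * w.1 + p.2 * w.2 : ℝ) : ℂ) * Complex.I)
          * angularFourierProd (fun p => minusCoord (f p)) w) := by
  have hneg := measurePreserving_prodMap_id_neg
  have hneg' : MeasurableEmbedding (Prod.map id Neg.neg : ℝ × ℝ → ℝ × ℝ) :=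
    MeasurableEmbedding.id.prodMap (Homeomorph.neg ℝ).measurableEmbedding
  have hGp' : Integrable fun q : ℝ × ℝ =>
      angularFourierProd (fun p => plusCoord (f p)) (q.1, -q.2) :=
    hneg.integrable_comp_of_integrable hGp
  simp_rw [QFT_T_eq_plusEmb_add_minusEmb hf, Prod.mk.eta]
  rw [integral_qexp_mul_plusEmb_add_minusEmb_mul_qexp hGp' hGm (by fun_prop) (by fun_prop),
    ← hneg.integral_comp hneg']
  congr 2
  congr 1 with q
  simp [sub_eq_add_neg]

/-- If the 2D Fourier transforms of all four real components of `f` are integrable,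
then `f` is recovered a.e. from its two-sided QFT. -/
theorem qft_two_sided_inversion_of_component_FT_integrable
    (f : ℝ × ℝ → ℍ[ℝ]) (hf : Integrable f)
    (hF0 : Integrable (fun p : ℝ × ℝ => FT2D (fun q => (f q).re) p.1 p.2))
    (hF1 : Integrable (fun p : ℝ × ℝ => FT2D (fun q => (f q).imI) p.1 p.2))
    (hF2 : Integrable (fun p : ℝ × ℝ => FT2D (fun q => (f q).imJ) p.1 p.2))
    (hF3 : Integrable (fun p : ℝ × ℝ => FT2D (fun q => (f q).imK) p.1 p.2)) :
    ∀ᵐ p : ℝ × ℝ, f p =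
      (1 / (4 * π ^ 2)) • ∫ q : ℝ × ℝ, qexp qi (p.1 * q.1) * QFT_T f q.1 q.2 * qexp qj (p.2 * q.2) := by
  have hGp := integrable_angularFourierProd_clm_comp plusCoord hf hF0 hF1 hF2 hF3
  have hGm := integrable_angularFourierProd_clm_comp minusCoord hf hF0 hF1 hF2 hF3
  filter_upwards [(plusCoord.integrable_comp hf).ae_integral_exp_mul_angularFourierProd hGp,
    (minusCoord.integrable_comp hf).ae_integral_exp_mul_angularFourierProd hGm] with p hp hm
  rw [integral_qexp_mul_QFT_T_mul_qexp hf hGp hGm, hp, hm, map_smul, map_smul, ← smul_add,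
    plusEmb_plusCoord_add_minusEmb_minusCoord, smul_smul,
    show 1 / (4 * π ^ 2) * (2 * π) ^ 2 = 1 by field_simp; ring, one_smul]
end
end

section
/- Let n ≥ 0 and let f : ℝ² → ℍ be integrable and have partial derivatives with respect to the second variable t in the L¹ norm of all orders ≤ n, with g = ∂^n f / ∂t^n denoting the n-fold L¹-norm partial derivative with respect to t. Then the right-sided quaternion Fourier transforms satisfy 𝓖_R(u,v) = 𝓕_R(u,v) (j v)^n for all (u,v) ∈ ℝ². -/
open MeasureTheory Filter Real Set
open scoped Quaternion Topology

noncomputable section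

/-- Right-sided quaternion Fourier transform. -/
def QFT_R (f : ℝ × ℝ → ℍ[ℝ]) (u v : ℝ) : ℍ[ℝ] :=
  ∫ p : ℝ × ℝ, f p * qexp qi (-(u * p.1)) * qexp qj (-(v * p.2))

/-- `g` is the partial derivative of `f` with respect to the second variable in the `L¹` norm. -/
def L1PartialDerivT (f g : ℝ × ℝ → ℍ[ℝ]) : Prop :=
  Tendsto (fun h : ℝ => ∫ p : ℝ × ℝ, ‖h⁻¹ • (f (p.1, p.2 + h) - f p) - g p‖)
    (𝓝[≠] (0:ℝ)) (𝓝 0)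

/-!
Because the `j`-exponential stands rightmost in the kernel and `θ ↦ e^{jθ}` is a one-parameter
group, translating `f` by `h` in `t` multiplies `𝓕_R(u,v)` on the right by `e^{jvh}`. Hence the
transform of the difference quotient is `𝓕_R(u,v) (e^{jvh} - 1)/h`, which tends to `𝓕_R(u,v) (jv)`.
The kernel has unit norm, so `‖𝓕_R g‖ ≤ ‖g‖₁` and the transform of the `L¹` limit `∂f/∂t` is the
limit of these transforms.
-/

lemma qexp_eq_smul (μ : ℍ[ℝ]) : qexp μ = fun θ => Real.cos θ • (1 : ℍ[ℝ]) + Real.sin θ • μ := by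
  ext1 θ; rw [qexp, ← mul_one (Real.cos θ : ℍ[ℝ]), Quaternion.coe_mul_eq_smul]

lemma qexp_add {μ : ℍ[ℝ]} (hμ : μ * μ = -1) (a b : ℝ) :
    qexp μ (a + b) = qexp μ a * qexp μ b := by
  simp only [qexp_eq_smul, Real.cos_add, Real.sin_add, add_mul, mul_add, smul_mul_smul, hμ,
    one_mul, mul_one]
  module

lemma norm_qexp {μ : ℍ[ℝ]} (hre : μ.re = 0) (hμ : Quaternion.normSq μ = 1) (θ : ℝ) :
    ‖qexp μ θ‖ = 1 := by
  rw [Quaternion.normSq_def', hre] at hμ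
  rw [← sq_eq_sq₀ (norm_nonneg _) zero_le_one, sq, ← Quaternion.normSq_eq_norm_mul_self,
    Quaternion.normSq_def']
  simp only [qexp, Quaternion.re_add, Quaternion.re_coe, Quaternion.re_smul, Quaternion.imI_add,
    Quaternion.imI_coe, Quaternion.imI_smul, Quaternion.imJ_add, Quaternion.imJ_coe,
    Quaternion.imJ_smul, Quaternion.imK_add, Quaternion.imK_coe, Quaternion.imK_smul, hre,
    smul_eq_mul, mul_zero, add_zero, zero_add, one_pow]
  linear_combination (Real.sin θ) ^ 2 * hμ + Real.sin_sq_add_cos_sq θ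

lemma hasDerivAt_qexp_zero (μ : ℍ[ℝ]) : HasDerivAt (qexp μ) μ 0 := by
  rw [qexp_eq_smul]
  have := ((Real.hasDerivAt_cos 0).smul_const (1 : ℍ[ℝ])).add
    ((Real.hasDerivAt_sin 0).smul_const μ)
  rw [Real.sin_zero, Real.cos_zero, neg_zero, zero_smul, zero_add, one_smul] at this
  exact this

lemma tendsto_slope_qexp (μ : ℍ[ℝ]) (v : ℝ) :
    Tendsto (fun h : ℝ => h⁻¹ • (qexp μ (v * h) - 1)) (𝓝[≠] 0) (𝓝 (v • μ)) := by
  have hder : HasDerivAt (fun h => qexp μ (v * h)) (v • μ) 0 := by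
    have h0 : HasDerivAt (qexp μ) μ (v * 0) := by rw [mul_zero]; exact hasDerivAt_qexp_zero μ
    have := h0.scomp (0 : ℝ) ((hasDerivAt_id (0 : ℝ)).const_mul v)
    rwa [mul_one] at this
  simpa [slope_fun_def, qexp] using hasDerivAt_iff_tendsto_slope.mp hder

lemma qi_mul_qi : qi * qi = -1 := by
  ext <;>
    simp only [Quaternion.re_mul, Quaternion.imI_mul, Quaternion.imJ_mul, Quaternion.imK_mul] <;>
    norm_num [qi]

lemma qj_mul_qj : qj * qj = -1 := by
  ext <;>
    simp only [Quaternion.re_mul, Quaternion.imI_mul, Quaternion.imJ_mul, Quaternion.imK_mul] <;>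
    norm_num [qj]

lemma norm_qexp_qi (θ : ℝ) : ‖qexp qi θ‖ = 1 :=
  norm_qexp rfl (by rw [Quaternion.normSq_def']; norm_num [qi]) θ

lemma norm_qexp_qj (θ : ℝ) : ‖qexp qj θ‖ = 1 :=
  norm_qexp rfl (by rw [Quaternion.normSq_def']; norm_num [qj]) θ

lemma MeasureTheory.Integrable.comp_add_snd {f : ℝ × ℝ → ℍ[ℝ]} (hf : Integrable f) (h : ℝ) :
    Integrable fun p : ℝ × ℝ => f (p.1, p.2 + h) := by
  simpa [Prod.add_def] using hf.comp_add_right ((0 : ℝ), h)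

section QFT_R

variable {f g : ℝ × ℝ → ℍ[ℝ]}

lemma norm_QFT_R_integrand (f : ℝ × ℝ → ℍ[ℝ]) (u v : ℝ) (p : ℝ × ℝ) :
    ‖f p * qexp qi (-(u * p.1)) * qexp qj (-(v * p.2))‖ = ‖f p‖ := by
  rw [norm_mul, norm_mul, norm_qexp_qi, norm_qexp_qj, mul_one, mul_one]

lemma integrable_QFT_R_integrand (hf : Integrable f) (u v : ℝ) :
    Integrable fun p : ℝ × ℝ => f p * qexp qi (-(u * p.1)) * qexp qj (-(v * p.2)) := by
  refine (hf.mul_bdd ?_ (c := 1) ?_).mul_bdd (c := 1) ?_ ?_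
  · exact ((continuous_qexp qi).comp (by fun_prop)).aestronglyMeasurable
  · exact .of_forall fun p => (norm_qexp_qi _).le
  · exact ((continuous_qexp qj).comp (by fun_prop)).aestronglyMeasurable
  · exact .of_forall fun p => (norm_qexp_qj _).le

lemma norm_QFT_R_le (f : ℝ × ℝ → ℍ[ℝ]) (u v : ℝ) : ‖QFT_R f u v‖ ≤ ∫ p, ‖f p‖ :=
  (norm_integral_le_integral_norm _).trans_eq (by simp_rw [norm_QFT_R_integrand])

lemma QFT_R_sub (hf : Integrable f) (hg : Integrable g) (u v : ℝ) :
    QFT_R (f - g) u v = QFT_R f u v - QFT_R g u v := by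
  simp only [QFT_R, Pi.sub_apply, sub_mul]
  exact integral_sub (integrable_QFT_R_integrand hf u v) (integrable_QFT_R_integrand hg u v)

lemma QFT_R_smul (c : ℝ) (f : ℝ × ℝ → ℍ[ℝ]) (u v : ℝ) :
    QFT_R (c • f) u v = c • QFT_R f u v := by
  simp only [QFT_R, Pi.smul_apply, smul_mul_assoc]
  exact integral_smul c _

lemma QFT_R_comp_add_snd (hf : Integrable f) (h u v : ℝ) :
    QFT_R (fun p => f (p.1, p.2 + h)) u v = QFT_R f u v * qexp qj (v * h) := by
  have hshift : QFT_R (fun p => f (p.1, p.2 + h)) u v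
      = ∫ p : ℝ × ℝ, f p * qexp qi (-(u * p.1)) * qexp qj (-(v * (p.2 - h))) := by
    rw [QFT_R, ← integral_add_right_eq_self (fun p : ℝ × ℝ =>
      f p * qexp qi (-(u * p.1)) * qexp qj (-(v * (p.2 - h)))) ((0 : ℝ), h)]
    simp [Prod.add_def]
  rw [hshift, QFT_R, ← integral_mul_const_of_integrable (integrable_QFT_R_integrand hf u v)]
  congr 1; funext p
  rw [mul_assoc _ (qexp qj _), ← qexp_add qj_mul_qj]
  ring_nf

lemma QFT_R_slope_snd (hf : Integrable f) (h u v : ℝ) :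
    QFT_R (h⁻¹ • ((fun p => f (p.1, p.2 + h)) - f)) u v
      = QFT_R f u v * (h⁻¹ • (qexp qj (v * h) - 1)) := by
  rw [QFT_R_smul, QFT_R_sub (hf.comp_add_snd h) hf, QFT_R_comp_add_snd hf, mul_smul_comm,
    mul_sub, mul_one]

lemma tendsto_QFT_R_of_tendsto_integral_norm_sub {ι : Type*} {l : Filter ι}
    {F : ι → ℝ × ℝ → ℍ[ℝ]} (hF : ∀ i, Integrable (F i)) (hg : Integrable g)
    (hFg : Tendsto (fun i => ∫ p, ‖F i p - g p‖) l (𝓝 0)) (u v : ℝ) :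
    Tendsto (fun i => QFT_R (F i) u v) l (𝓝 (QFT_R g u v)) := by
  rw [tendsto_iff_norm_sub_tendsto_zero]
  refine squeeze_zero (fun _ => norm_nonneg _) (fun i => ?_) hFg
  rw [← QFT_R_sub (hF i) hg]
  exact norm_QFT_R_le _ u v

theorem QFT_R_of_L1PartialDerivT (hf : Integrable f) (hg : Integrable g)
    (hfg : L1PartialDerivT f g) (u v : ℝ) : QFT_R g u v = QFT_R f u v * (v • qj) := by
  have hslope := tendsto_QFT_R_of_tendsto_integral_norm_sub
    (fun h => ((hf.comp_add_snd h).sub hf).smul h⁻¹) hg hfg u v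
  simp only [QFT_R_slope_snd hf] at hslope
  exact tendsto_nhds_unique hslope ((tendsto_slope_qexp qj v).const_mul _)

end QFT_R

theorem qft_right_sided_iterated_deriv_t_general
    (n : ℕ) (f : ℝ × ℝ → ℍ[ℝ])
    (D : ℕ → (ℝ × ℝ → ℍ[ℝ])) (hD0 : D 0 = f)
    (hInt : ∀ k ≤ n, Integrable (D k))
    (hDt : ∀ k < n, L1PartialDerivT (D k) (D (k + 1))) :
    ∀ u v : ℝ, QFT_R (D n) u v = QFT_R f u v * (v • qj) ^ n := by
  intro u v
  induction n with
  | zero => simp [hD0]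
  | succ n ih =>
    rw [QFT_R_of_L1PartialDerivT (hInt n n.le_succ) (hInt (n + 1) le_rfl) (hDt n n.lt_succ_self),
      ih (fun k hk => hInt k (hk.trans n.le_succ)) (fun k hk => hDt k (hk.trans n.lt_succ_self)),
      pow_succ, mul_assoc]

/-- The right-sided QFT of the `n`-fold `L¹`-norm partial derivative `∂^n f/∂t^n`
equals `𝓕_R(u,v) (jv)^n`. -/
theorem qft_right_sided_iterated_deriv_t
    (n : ℕ) (f : ℝ × ℝ → ℍ[ℝ]) (hf : Integrable f)
    (D : ℕ → (ℝ × ℝ → ℍ[ℝ])) (hD0 : D 0 = f)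
    (hInt : ∀ k ≤ n, Integrable (D k))
    (hDt : ∀ k < n, L1PartialDerivT (D k) (D (k + 1))) :
    ∀ u v : ℝ, QFT_R (D n) u v = QFT_R f u v * (v • qj) ^ n :=
  qft_right_sided_iterated_deriv_t_general n f D hD0 hInt hDt
end
end
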